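/- arXiv:1709.03498 — 2 statements merged into one kernel-verified Lean document; each statement's English description precedes it below -/
import Mathlib

section
/- For every γ > 0 and every a > −1, the functions s ↦ (K₂(s)/s)(s − γ)^a and s ↦ (K₃(s) − K₂(s)/s)(s − γ)^a are (Lebesgue) integrable on the interval (γ, ∞), and ∫_γ^∞ (K₂(s)/s)(s − γ)^a ds > 0; in particular the ratio r(γ, a) is well defined. -/
set_option maxHeartbeats 1000000


open MeasureTheory Real Filter Set

/-- Modified Bessel function of the second kind, integral representation. -/
noncomputable def besselK (n : ℕ) (x : ℝ) : ℝ :=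
  ∫ t in Set.Ioi (0 : ℝ), Real.exp (-x * Real.cosh t) * Real.cosh (n * t)

/-- Dimensionless energy-to-pressure ratio `r(γ, a) = e/p` of a relativistic
gas with internal structure, state-density measure `φ(I) = I^a`. -/
noncomputable def rRatio (γ a : ℝ) : ℝ :=
  (∫ s in Set.Ioi γ, (besselK 3 s - besselK 2 s / s) * (s - γ) ^ a) /
  (∫ s in Set.Ioi γ, (besselK 2 s / s) * (s - γ) ^ a)

lemma cosh_ge (t : ℝ) (ht : 0 ≤ t) : (1 + t/2)^2 / 2 ≤ Real.cosh t := by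
  have h1 : Real.exp t / 2 ≤ Real.cosh t := by
    rw [Real.cosh_eq]
    have := Real.exp_nonneg (-t)
    linarith
  have h2 : (1 + t/2)^2 ≤ Real.exp t := by
    have := Real.add_one_le_exp (t/2)
    have h3 : Real.exp (t/2) ^ 2 = Real.exp t := by
      rw [sq, ← Real.exp_add]; ring_nf
    nlinarith [Real.exp_nonneg (t/2)]
  linarith

lemma besselK_integrand_integrable (n : ℕ) {x : ℝ} (hx : 0 < x) :
    IntegrableOn (fun t : ℝ => Real.exp (-x * Real.cosh t) * Real.cosh (n * t)) (Ioi 0) := by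
  obtain ⟨A, hA⟩ : ∃ A : ℝ, A = 2 * (n+1)^2 / x := ⟨_, rfl⟩
  have hdom : IntegrableOn (fun t : ℝ => Real.exp A * Real.exp (-(1:ℝ) * t)) (Ioi 0) :=
    (exp_neg_integrableOn_Ioi 0 one_pos).const_mul _
  refine Integrable.mono' hdom ?_ ?_
  · have hcont : Continuous (fun t : ℝ => Real.exp (-x * Real.cosh t) * Real.cosh (n * t)) := by
      fun_prop
    exact hcont.aestronglyMeasurable
  · filter_upwards [ae_restrict_mem measurableSet_Ioi] with t ht
    have ht0 : (0:ℝ) ≤ t := le_of_lt ht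
    have hc : (1 + t/2)^2 / 2 ≤ Real.cosh t := cosh_ge t ht0
    have hcosh_nt : Real.cosh (n * t) ≤ Real.exp (n * t) := by
      rw [Real.cosh_eq]
      have := Real.exp_nonneg (-(n * t))
      have := Real.exp_nonneg (n * t)
      have hnt : (0:ℝ) ≤ n * t := by positivity
      linarith [Real.exp_le_exp.mpr (show -((n:ℝ)*t) ≤ (n:ℝ)*t by linarith)]
    have h1 : Real.exp (-x * Real.cosh t) * Real.cosh (n * t)
        ≤ Real.exp (-x * Real.cosh t + n * t) := by
      rw [Real.exp_add]
      exact mul_le_mul_of_nonneg_left hcosh_nt (Real.exp_nonneg _)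
    have h2 : -x * Real.cosh t + n * t ≤ A + -(1:ℝ) * t := by
      have hkey : (n+1) * t ≤ x * Real.cosh t + A := by
        have : x * ((1 + t/2)^2/2) ≤ x * Real.cosh t := by
          exact mul_le_mul_of_nonneg_left hc (le_of_lt hx)
        have hAx : A * x = 2 * (n+1)^2 := by rw [hA]; field_simp
        nlinarith [sq_nonneg (x * t - 4 * ((n:ℝ)+1)), mul_pos hx hx, sq_nonneg t]
      linarith
    have hpos : 0 < Real.exp (-x * Real.cosh t) * Real.cosh (n * t) := by
      positivity
    rw [Real.norm_eq_abs, abs_of_pos hpos, ← Real.exp_add]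
    exact h1.trans (Real.exp_le_exp.mpr h2)

lemma besselK_nonneg (n : ℕ) (x : ℝ) : 0 ≤ besselK n x := by
  apply setIntegral_nonneg measurableSet_Ioi
  intro t _
  positivity

lemma besselK_pos (n : ℕ) {x : ℝ} (hx : 0 < x) : 0 < besselK n x := by
  rw [besselK, setIntegral_pos_iff_support_of_nonneg_ae]
  · have hsup : Function.support (fun t : ℝ => Real.exp (-x * Real.cosh t) * Real.cosh (n * t)) = univ := by
      ext t
      simp only [Function.mem_support, mem_univ, iff_true]
      positivity
    rw [hsup, univ_inter, Real.volume_Ioi]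
    simp
  · filter_upwards with t
    positivity
  · exact besselK_integrand_integrable n hx

lemma besselK_le {n : ℕ} {γ s : ℝ} (hγ : 0 < γ) (hs : γ ≤ s) :
    besselK n s ≤ Real.exp (γ - s) * besselK n γ := by
  have hsp : 0 < s := lt_of_lt_of_le hγ hs
  rw [besselK, besselK, ← integral_const_mul]
  apply setIntegral_mono_on (besselK_integrand_integrable n hsp)
    ((besselK_integrand_integrable n hγ).const_mul _) measurableSet_Ioi
  intro t _
  rw [← mul_assoc, ← Real.exp_add]
  apply mul_le_mul_of_nonneg_right _ (by positivity)
  apply Real.exp_le_exp.mpr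
  have h1 : 1 ≤ Real.cosh t := Real.one_le_cosh t
  nlinarith

lemma besselK_stronglyMeasurable (n : ℕ) : StronglyMeasurable (besselK n) := by
  have hcont : Continuous (fun p : ℝ × ℝ => Real.exp (-p.1 * Real.cosh p.2) * Real.cosh (n * p.2)) := by
    fun_prop
  exact hcont.stronglyMeasurable.integral_prod_right'

lemma weight_integrable {γ a : ℝ} (ha : -1 < a) :
    IntegrableOn (fun s : ℝ => Real.exp (γ - s) * (s - γ) ^ a) (Ioi γ) := by
  have h0 : IntegrableOn (fun x : ℝ => Real.exp (-x) * x ^ a) (Ioi 0) := by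
    have := Real.GammaIntegral_convergent (show (0:ℝ) < a + 1 by linarith)
    simpa using this
  have h1 : Integrable ((Ioi (0:ℝ)).indicator (fun x : ℝ => Real.exp (-x) * x ^ a)) :=
    (integrable_indicator_iff measurableSet_Ioi).mpr h0
  have h2 := h1.comp_sub_right γ
  have h3 : (fun s : ℝ => (Ioi (0:ℝ)).indicator (fun x : ℝ => Real.exp (-x) * x ^ a) (s - γ))
      = (Ioi γ).indicator (fun s : ℝ => Real.exp (γ - s) * (s - γ) ^ a) := by
    ext s
    by_cases hs : γ < s
    · rw [indicator_of_mem (by simpa [sub_pos] using hs), indicator_of_mem (mem_Ioi.mpr hs)]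
      ring_nf
    · rw [indicator_of_notMem (by simpa [sub_pos] using hs),
        indicator_of_notMem (by simpa using hs)]
  rw [h3] at h2
  exact (integrable_indicator_iff measurableSet_Ioi).mp h2

/-- For `γ > 0` and `a > -1`, both integrands defining `r(γ, a)` are integrable on
`(γ, ∞)` and the denominator integral is positive, so `r(γ, a)` is well defined. -/
theorem rRatio_well_defined (γ a : ℝ) (hγ : 0 < γ) (ha : -1 < a) :
    MeasureTheory.IntegrableOn (fun s : ℝ => (besselK 2 s / s) * (s - γ) ^ a) (Set.Ioi γ) ∧
    MeasureTheory.IntegrableOn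
      (fun s : ℝ => (besselK 3 s - besselK 2 s / s) * (s - γ) ^ a) (Set.Ioi γ) ∧
    0 < ∫ s in Set.Ioi γ, (besselK 2 s / s) * (s - γ) ^ a := by
  -- measurability facts
  have hm2 : StronglyMeasurable (besselK 2) := besselK_stronglyMeasurable 2
  have hm3 : StronglyMeasurable (besselK 3) := besselK_stronglyMeasurable 3
  have hmw : Measurable (fun s : ℝ => (s - γ) ^ a) :=
    by fun_prop
  have hmeas1 : AEStronglyMeasurable (fun s : ℝ => (besselK 2 s / s) * (s - γ) ^ a)
      (volume.restrict (Ioi γ)) := by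
    exact (((hm2.measurable.div measurable_id).mul hmw)).aestronglyMeasurable
  have hmeas2 : AEStronglyMeasurable
      (fun s : ℝ => (besselK 3 s - besselK 2 s / s) * (s - γ) ^ a)
      (volume.restrict (Ioi γ)) := by
    exact (((hm3.measurable.sub (hm2.measurable.div measurable_id)).mul hmw)).aestronglyMeasurable
  -- dominating function
  set C : ℝ := besselK 3 γ + besselK 2 γ / γ with hC
  have hCpos : 0 < C := by
    have := besselK_pos 3 hγ
    have := besselK_pos 2 hγ
    positivity
  have hw : IntegrableOn (fun s : ℝ => C * (Real.exp (γ - s) * (s - γ) ^ a)) (Ioi γ) :=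
    (weight_integrable ha).const_mul C
  -- key pointwise bounds on Ioi γ
  have hbd : ∀ s ∈ Ioi γ, besselK 2 s / s ≤ Real.exp (γ - s) * (besselK 2 γ / γ) ∧
      besselK 3 s ≤ Real.exp (γ - s) * besselK 3 γ ∧ 0 < besselK 2 s / s ∧ 0 < s := by
    intro s hs
    have hs' : γ < s := hs
    have hsp : 0 < s := hγ.trans hs'
    refine ⟨?_, besselK_le hγ hs'.le, div_pos (besselK_pos 2 hsp) hsp, hsp⟩
    have h1 : besselK 2 s ≤ Real.exp (γ - s) * besselK 2 γ := besselK_le hγ hs'.le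
    have h2 : besselK 2 s / s ≤ besselK 2 s / γ :=
      div_le_div_of_nonneg_left (besselK_nonneg 2 s) hγ hs'.le |>.trans_eq rfl
    calc besselK 2 s / s ≤ besselK 2 s / γ := h2
      _ ≤ (Real.exp (γ - s) * besselK 2 γ) / γ := by
          gcongr
      _ = Real.exp (γ - s) * (besselK 2 γ / γ) := by ring
  -- integrability of the first integrand
  have hint1 : IntegrableOn (fun s : ℝ => (besselK 2 s / s) * (s - γ) ^ a) (Ioi γ) := by
    refine Integrable.mono' hw hmeas1 ?_
    filter_upwards [ae_restrict_mem measurableSet_Ioi] with s hs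
    obtain ⟨hb2, hb3, hpos, hsp⟩ := hbd s hs
    have hwp : 0 < (s - γ) ^ a := Real.rpow_pos_of_pos (by simpa [sub_pos] using (mem_Ioi.mp hs)) a
    rw [Real.norm_eq_abs, abs_of_pos (mul_pos hpos hwp)]
    have : besselK 2 s / s ≤ C * Real.exp (γ - s) := by
      have h23 : besselK 2 γ / γ ≤ C := by
        have := besselK_pos 3 hγ; rw [hC]; linarith
      calc besselK 2 s / s ≤ Real.exp (γ - s) * (besselK 2 γ / γ) := hb2
        _ ≤ Real.exp (γ - s) * C := by
            exact mul_le_mul_of_nonneg_left h23 (Real.exp_nonneg _)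
        _ = C * Real.exp (γ - s) := by ring
    calc (besselK 2 s / s) * (s - γ) ^ a ≤ (C * Real.exp (γ - s)) * (s - γ) ^ a :=
        mul_le_mul_of_nonneg_right this hwp.le
      _ = C * (Real.exp (γ - s) * (s - γ) ^ a) := by ring
  -- integrability of the second integrand
  have hint2 : IntegrableOn
      (fun s : ℝ => (besselK 3 s - besselK 2 s / s) * (s - γ) ^ a) (Ioi γ) := by
    refine Integrable.mono' hw hmeas2 ?_
    filter_upwards [ae_restrict_mem measurableSet_Ioi] with s hs
    obtain ⟨hb2, hb3, hpos, hsp⟩ := hbd s hs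
    have hwp : 0 < (s - γ) ^ a := Real.rpow_pos_of_pos (by simpa [sub_pos] using (mem_Ioi.mp hs)) a
    have habs : |besselK 3 s - besselK 2 s / s| ≤ C * Real.exp (γ - s) := by
      rw [abs_sub_le_iff]
      constructor
      · have : besselK 3 s ≤ Real.exp (γ - s) * besselK 3 γ := hb3
        have h2 : 0 ≤ besselK 2 γ / γ * Real.exp (γ - s) :=
          mul_nonneg (div_nonneg (besselK_nonneg 2 γ) hγ.le) (Real.exp_nonneg _)
        rw [hC]; nlinarith [hpos.le]
      · have h3 : 0 ≤ besselK 3 s := besselK_nonneg 3 s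
        have : besselK 2 s / s ≤ Real.exp (γ - s) * (besselK 2 γ / γ) := hb2
        have h4 : 0 ≤ Real.exp (γ - s) * besselK 3 γ :=
          mul_nonneg (Real.exp_nonneg _) (besselK_nonneg 3 γ)
        rw [hC]; nlinarith
    rw [Real.norm_eq_abs, abs_mul, abs_of_pos hwp]
    calc |besselK 3 s - besselK 2 s / s| * (s - γ) ^ a
        ≤ (C * Real.exp (γ - s)) * (s - γ) ^ a := mul_le_mul_of_nonneg_right habs hwp.le
      _ = C * (Real.exp (γ - s) * (s - γ) ^ a) := by ring
  refine ⟨hint1, hint2, ?_⟩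
  -- positivity of the denominator
  rw [setIntegral_pos_iff_support_of_nonneg_ae ?_ hint1]
  · have hsub : Ioi γ ⊆ Function.support (fun s : ℝ => (besselK 2 s / s) * (s - γ) ^ a) := by
      intro s hs
      obtain ⟨hb2, hb3, hpos, hsp⟩ := hbd s hs
      have hwp : 0 < (s - γ) ^ a :=
        Real.rpow_pos_of_pos (by simpa [sub_pos] using (mem_Ioi.mp hs)) a
      exact (mul_pos hpos hwp).ne'
    have : Function.support (fun s : ℝ => (besselK 2 s / s) * (s - γ) ^ a) ∩ Ioi γ = Ioi γ :=
      inter_eq_self_of_subset_right hsub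
    rw [this, Real.volume_Ioi]
    simp
  · filter_upwards [ae_restrict_mem measurableSet_Ioi] with s hs
    obtain ⟨hb2, hb3, hpos, hsp⟩ := hbd s hs
    have hwp : 0 < (s - γ) ^ a := Real.rpow_pos_of_pos (by simpa [sub_pos] using (mem_Ioi.mp hs)) a
    positivity
end

section
/- The relativistic Euler system with energy e = r·p is hyperbolic: the five-dimensional constraint space V = {(δn, δT, δU) ∈ ℝ × ℝ × ℝ⁴ : η(U, δU) = 0} decomposes as the direct sum V = S₀ ⊕ S_{1/√r} ⊕ S_{−1/√r} of the solution spaces of the characteristic (wave) system for the eigenvalues λ = 0, λ = 1/√r and λ = −1/√r; in particular there exists a basis of V consisting of five eigenvectors. -/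
/-
Write `δp = T δn + n δT` (the variation of the pressure `p = n T`) and `q = η(ν, δU)`.
Contracting (E2) with `ν` gives `δp = (λ / c) n T (r + 1) q` for every `λ`. For `λ = 0` this and
(E1) cut `S₀` out of `V` by `δp = q = 0`. For `λ² r = 1`, substituting back into (E2) forces
`δU = -q ν`, so `S_λ` is the line through `(n r λ, T λ, -c ν)`. The map `v ↦ (δp, q)` kills `S₀`
and sends the two lines to the independent vectors `(±λ n T (r + 1), c)` of `ℝ²`, whence
`V = S₀ ⊕ S₊ ⊕ S₋`; finally `V` is the kernel of a nonzero functional on `ℝ⁶`.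
-/

open MeasureTheory Real Filter Set

/-- The Minkowski bilinear form on `ℝ⁴`. -/
def eta (x y : Fin 4 → ℝ) : ℝ :=
  x 0 * y 0 - x 1 * y 1 - x 2 * y 2 - x 3 * y 3

/-- The characteristic (wave) system of the relativistic Euler equations with
energy `e = r·p`, for the characteristic speed `lam` (in light speed units), in the
unknowns `v = (δn, δT, δU)`, including the linearized constraint `η(U, δU) = 0`. -/
def WaveSol (c n T r lam : ℝ) (U ν : Fin 4 → ℝ) (v : ℝ × ℝ × (Fin 4 → ℝ)) : Prop :=
  eta U v.2.2 = 0 ∧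
  -- (E1)
  (-(lam * c) * v.1 + n * eta ν v.2.2 = 0) ∧
  -- (E2)
  (∀ β : Fin 4,
    -(ν β) * (T * v.1 + n * v.2.1) + n * T * ((r + 1) / c ^ 2) * U β * eta ν v.2.2
      - (lam / c) * (r * U β * (T * v.1 + n * v.2.1) + n * T * (r + 1) * v.2.2 β) = 0)

theorem iSupIndep_fin_three_of_disjoint {α : Type*} [CompleteLattice α] [IsModularLattice α]
    {a b c : α} (hbc : Disjoint b c) (ha : Disjoint a (b ⊔ c)) : iSupIndep ![a, b, c] := by
  have hb : Disjoint b (c ⊔ a) := hbc.disjoint_sup_right_of_disjoint_sup_left ha.symm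
  simpa [iSupIndep_fin_three, ha, hb] using disjoint_sup_right_of_disjoint_sup_right ha hb

section ComplementOfKernel

variable {K M N : Type*} [Field K] [AddCommGroup M] [Module K M] [AddCommGroup N] [Module K N]
  {Φ : M →ₗ[K] N} {a b : M}

theorem iSupIndep_span_pair_of_le_ker {S : Submodule K M} (hS : S ≤ LinearMap.ker Φ)
    (hli : LinearIndependent K ![Φ a, Φ b]) : iSupIndep ![S, K ∙ a, K ∙ b] := by
  have hab : LinearIndependent K ![a, b] :=
    .of_comp Φ (by convert hli using 1; ext i; fin_cases i <;> rfl)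
  refine iSupIndep_fin_three_of_disjoint ?_ ?_
  · exact hab.iSupIndep_span_singleton.pairwiseDisjoint (i := 0) (j := 1) (by decide)
  · rw [Submodule.disjoint_def]
    rintro x hxS hx
    simp only [Submodule.mem_sup, Submodule.mem_span_singleton] at hx
    obtain ⟨_, ⟨s, rfl⟩, _, ⟨t, rfl⟩, rfl⟩ := hx
    have hΦ : s • Φ a + t • Φ b = 0 := by simpa using hS hxS
    obtain ⟨rfl, rfl⟩ := LinearIndependent.pair_iff.mp hli s t hΦ
    simp

theorem inf_ker_sup_span_sup_span_eq {V : Submodule K M} (ha : a ∈ V) (hb : b ∈ V)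
    (hN : Module.finrank K N = 2) (hli : LinearIndependent K ![Φ a, Φ b]) :
    V ⊓ LinearMap.ker Φ ⊔ K ∙ a ⊔ K ∙ b = V := by
  have hspan : Submodule.span K {Φ a, Φ b} = ⊤ := by
    rw [← Matrix.range_cons_cons_empty _ _ ![]]
    exact hli.span_eq_top_of_card_eq_finrank (by simp [hN])
  refine le_antisymm (sup_le (sup_le inf_le_left ?_) ?_) fun x hx => ?_
  · exact (Submodule.span_singleton_le_iff_mem a V).mpr ha
  · exact (Submodule.span_singleton_le_iff_mem b V).mpr hb
  obtain ⟨s, t, hst⟩ := Submodule.mem_span_pair.mp (hspan ▸ Submodule.mem_top : Φ x ∈ _)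
  have hx₀ : x - s • a - t • b ∈ V ⊓ LinearMap.ker Φ :=
    ⟨V.sub_mem (V.sub_mem hx (V.smul_mem s ha)) (V.smul_mem t hb), by simp [← hst]⟩
  have hdec : x = (x - s • a - t • b) + s • a + t • b := by abel
  rw [hdec]
  exact Submodule.add_mem_sup
    (Submodule.add_mem_sup hx₀ (Submodule.smul_mem _ s (Submodule.mem_span_singleton_self a)))
    (Submodule.smul_mem _ t (Submodule.mem_span_singleton_self b))

end ComplementOfKernel

theorem linearIndependent_pair_neg_fst {K : Type*} [Field K] [NeZero (2 : K)] {a b : K}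
    (ha : a ≠ 0) (hb : b ≠ 0) :
    LinearIndependent K ![(a, b), (-a, b)] := by
  refine LinearIndependent.pair_iff.mpr fun s t hst => ?_
  simp only [Prod.smul_mk, smul_eq_mul, Prod.mk_add_mk, Prod.mk_eq_zero] at hst
  have hs : a * (s - t) = 0 := by linear_combination hst.1
  have ht : b * (s + t) = 0 := by linear_combination hst.2
  replace hs := (mul_eq_zero.mp hs).resolve_left ha
  replace ht := (mul_eq_zero.mp ht).resolve_left hb
  have h2s : (2 : K) * s = 0 := by linear_combination hs + ht
  have h2t : (2 : K) * t = 0 := by linear_combination ht - hs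
  exact ⟨(mul_eq_zero.mp h2s).resolve_left two_ne_zero,
    (mul_eq_zero.mp h2t).resolve_left two_ne_zero⟩

def etaLeft (x : Fin 4 → ℝ) : (Fin 4 → ℝ) →ₗ[ℝ] ℝ where
  toFun := eta x
  map_add' y z := by simp only [eta, Pi.add_apply]; ring
  map_smul' a y := by simp only [eta, Pi.smul_apply, smul_eq_mul, RingHom.id_apply]; ring

def constraintForm (U : Fin 4 → ℝ) : (ℝ × ℝ × (Fin 4 → ℝ)) →ₗ[ℝ] ℝ :=
  etaLeft U ∘ₗ LinearMap.snd ℝ ℝ _ ∘ₗ LinearMap.snd ℝ ℝ _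

def pressureNormalVelocity (n T : ℝ) (ν : Fin 4 → ℝ) : (ℝ × ℝ × (Fin 4 → ℝ)) →ₗ[ℝ] ℝ × ℝ :=
  (T • LinearMap.fst ℝ ℝ _ + n • (LinearMap.fst ℝ ℝ _ ∘ₗ LinearMap.snd ℝ ℝ _)).prod
    (etaLeft ν ∘ₗ LinearMap.snd ℝ ℝ _ ∘ₗ LinearMap.snd ℝ ℝ _)

def waveVector (c n T r lam : ℝ) (ν : Fin 4 → ℝ) : ℝ × ℝ × (Fin 4 → ℝ) :=
  (n * r * lam, T * lam, -c • ν)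

section WaveSystem

variable {c n T r lam : ℝ} {U ν : Fin 4 → ℝ} {v : ℝ × ℝ × (Fin 4 → ℝ)}

theorem constraintForm_apply : constraintForm U v = eta U v.2.2 := rfl

theorem pressureNormalVelocity_apply :
    pressureNormalVelocity n T ν v = (T * v.1 + n * v.2.1, eta ν v.2.2) := rfl

theorem WaveSol.pressure_eq (hν : eta ν ν = -1) (hUν : eta U ν = 0)
    (h : WaveSol c n T r lam U ν v) :
    T * v.1 + n * v.2.1 = lam / c * (n * T * (r + 1)) * eta ν v.2.2 := by
  obtain ⟨-, -, hE⟩ := h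
  simp only [eta] at hE hν hUν ⊢
  linear_combination ν 0 * hE 0 - ν 1 * hE 1 - ν 2 * hE 2 - ν 3 * hE 3
    + (T * v.1 + n * v.2.1) * hν
    + (lam / c * r * (T * v.1 + n * v.2.1) - n * T * ((r + 1) / c ^ 2)
      * (ν 0 * v.2.2 0 - ν 1 * v.2.2 1 - ν 2 * v.2.2 2 - ν 3 * v.2.2 3)) * hUν

theorem waveSol_zero_iff (hn : n ≠ 0) (hν : eta ν ν = -1) (hUν : eta U ν = 0) :
    WaveSol c n T r 0 U ν v ↔
      v ∈ LinearMap.ker (constraintForm U) ⊓ LinearMap.ker (pressureNormalVelocity n T ν) := by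
  simp only [Submodule.mem_inf, LinearMap.mem_ker, constraintForm_apply,
    pressureNormalVelocity_apply, Prod.mk_eq_zero]
  constructor
  · intro h
    have hp := h.pressure_eq hν hUν
    obtain ⟨hU, h1, -⟩ := h
    refine ⟨hU, by simpa using hp, ?_⟩
    simpa [hn] using h1
  · rintro ⟨hU, hp, hq⟩
    exact ⟨hU, by simp [hq], fun β => by simp [hp, hq]⟩

theorem WaveSol.velocity_eq (hc : c ≠ 0) (hn : n ≠ 0) (hT : T ≠ 0) (hlam : lam ^ 2 * r = 1)
    (hν : eta ν ν = -1) (hUν : eta U ν = 0) (h : WaveSol c n T r lam U ν v) :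
    v.2.2 = -eta ν v.2.2 • ν := by
  have hp := h.pressure_eq hν hUν
  obtain ⟨-, -, hE⟩ := h
  have hlam0 : lam ≠ 0 := by rintro rfl; simp at hlam
  have hr : r + 1 ≠ 0 := by nlinarith [sq_nonneg lam]
  funext β
  have key : lam / c * (n * T * (r + 1)) * (v.2.2 β + eta ν v.2.2 * ν β) = 0 := by
    linear_combination -(hE β) + (-ν β - lam / c * r * U β) * hp
      - (n * T * (r + 1) / c ^ 2 * U β * eta ν v.2.2) * hlam
  have := (mul_eq_zero.mp key).resolve_left (by positivity)
  simp only [Pi.smul_apply, smul_eq_mul]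
  linear_combination this

theorem waveSol_iff_mem_span_waveVector (hc : c ≠ 0) (hn : n ≠ 0) (hT : T ≠ 0)
    (hlam : lam ^ 2 * r = 1) (hν : eta ν ν = -1) (hUν : eta U ν = 0) :
    WaveSol c n T r lam U ν v ↔ v ∈ ℝ ∙ waveVector c n T r lam ν := by
  rw [Submodule.mem_span_singleton]
  constructor
  · intro h
    have hu := h.velocity_eq hc hn hT hlam hν hUν
    have hp := h.pressure_eq hν hUν
    obtain ⟨-, h1, -⟩ := h
    have hδn : c * v.1 = n * r * lam * eta ν v.2.2 := by
      linear_combination (-(r * lam)) * h1 - (c * v.1) * hlam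
    have hδT : c * v.2.1 = T * lam * eta ν v.2.2 := by
      refine mul_left_cancel₀ hn ?_
      field_simp at hp
      linear_combination hp - T * hδn
    refine ⟨eta ν v.2.2 / c, Prod.ext ?_ (Prod.ext ?_ ?_)⟩ <;>
      simp only [waveVector, Prod.smul_mk, smul_eq_mul, smul_smul]
    · field_simp
      linear_combination -hδn
    · field_simp
      linear_combination -hδT
    · conv_rhs => rw [hu]
      congr 1
      field_simp
  · rintro ⟨s, rfl⟩
    simp only [eta] at hν hUν
    refine ⟨?_, ?_, fun β => ?_⟩ <;>
      simp only [waveVector, Prod.smul_mk, eta, Pi.smul_apply, smul_eq_mul] <;> field_simp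
    · linear_combination (-(s * c)) * hUν
    · linear_combination -(c * s * n) * (hν + hlam)
    · linear_combination -(U β * T * s * n * (1 + r)) * (hν + hlam)

theorem constraintForm_waveVector (hUν : eta U ν = 0) :
    constraintForm U (waveVector c n T r lam ν) = 0 := by
  simp only [constraintForm_apply, waveVector, eta, Pi.smul_apply, smul_eq_mul] at hUν ⊢
  linear_combination -c * hUν

theorem pressureNormalVelocity_waveVector (hν : eta ν ν = -1) :
    pressureNormalVelocity n T ν (waveVector c n T r lam ν) = (lam * (n * T * (r + 1)), c) := by
  simp only [pressureNormalVelocity_apply, waveVector, eta, Pi.smul_apply, smul_eq_mul] at hν ⊢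
  exact Prod.ext (by ring) (by linear_combination -c * hν)

theorem finrank_ker_constraintForm (hU : eta U U ≠ 0) :
    Module.finrank ℝ (LinearMap.ker (constraintForm U)) = 5 := by
  have hf : constraintForm U ≠ 0 := fun h => hU (LinearMap.congr_fun h (0, 0, U))
  have := Module.Dual.finrank_ker_add_one_of_ne_zero hf
  simp only [Module.finrank_prod, Module.finrank_self, Module.finrank_fin_fun] at this
  omega

end WaveSystem

/-- Hyperbolicity: the five-dimensional constraint space `V = {η(U, δU) = 0}` is the
direct sum of the solution spaces of the characteristic system for the eigenvalues
`λ = 0`, `λ = 1/√r`, `λ = -1/√r`; in particular `V` has a basis of five eigenvectors. -/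
theorem wave_system_hyperbolicity (c n T r : ℝ) (hc : 0 < c) (hn : 0 < n) (hT : 0 < T)
    (hr : 0 < r) (U ν : Fin 4 → ℝ) (hU : eta U U = c ^ 2) (hν : eta ν ν = -1)
    (hUν : eta U ν = 0) :
    ∃ V S₀ Sₚ Sₘ : Submodule ℝ (ℝ × ℝ × (Fin 4 → ℝ)),
      (V : Set (ℝ × ℝ × (Fin 4 → ℝ))) = {v | eta U v.2.2 = 0} ∧
      (S₀ : Set (ℝ × ℝ × (Fin 4 → ℝ))) = {v | WaveSol c n T r 0 U ν v} ∧
      (Sₚ : Set (ℝ × ℝ × (Fin 4 → ℝ))) = {v | WaveSol c n T r (1 / Real.sqrt r) U ν v} ∧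
      (Sₘ : Set (ℝ × ℝ × (Fin 4 → ℝ))) = {v | WaveSol c n T r (-(1 / Real.sqrt r)) U ν v} ∧
      S₀ ⊔ Sₚ ⊔ Sₘ = V ∧
      iSupIndep ![S₀, Sₚ, Sₘ] ∧
      Module.finrank ℝ V = 5 := by
  set lam := 1 / Real.sqrt r
  have hlam : lam ^ 2 * r = 1 := by
    rw [div_pow, Real.sq_sqrt hr.le]; field_simp
  have hlam' : (-lam) ^ 2 * r = 1 := by rwa [neg_sq]
  have hK : lam * (n * T * (r + 1)) ≠ 0 := by positivity
  set V := LinearMap.ker (constraintForm U)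
  set Φ := pressureNormalVelocity n T ν
  set wₚ := waveVector c n T r lam ν
  set wₘ := waveVector c n T r (-lam) ν
  have hli : LinearIndependent ℝ ![Φ wₚ, Φ wₘ] := by
    simp only [Φ, wₚ, wₘ, pressureNormalVelocity_waveVector hν, neg_mul]
    exact linearIndependent_pair_neg_fst hK hc.ne'
  refine ⟨V, V ⊓ LinearMap.ker Φ, ℝ ∙ wₚ, ℝ ∙ wₘ, rfl, ?_, ?_, ?_, ?_,
    iSupIndep_span_pair_of_le_ker inf_le_right hli,
    finrank_ker_constraintForm (by rw [hU]; positivity)⟩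
  · ext v; exact (waveSol_zero_iff hn.ne' hν hUν).symm
  · ext v; exact (waveSol_iff_mem_span_waveVector hc.ne' hn.ne' hT.ne' hlam hν hUν).symm
  · ext v; exact (waveSol_iff_mem_span_waveVector hc.ne' hn.ne' hT.ne' hlam' hν hUν).symm
  · exact inf_ker_sup_span_sup_span_eq (constraintForm_waveVector hUν)
      (constraintForm_waveVector hUν) (by simp) hli
end
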